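/- arXiv:1410.4628 — 10 statements merged into one kernel-verified Lean document; each statement's English description precedes it below -/
import Mathlib

section
/- The map R_{α,β}(x₁,x₂,y₁,y₂) = (y₁ + (α−β)/(x₁−y₂), y₂, x₁, x₂ + (α−β)/(x₁−y₂)), defined on tuples of complex numbers with x₁ ≠ y₂ and the analogous non-degeneracy at each step, satisfies the parametric Yang–Baxter equation R²³_{β,γ} ∘ R¹³_{α,γ} ∘ R¹²_{α,β} = R¹²_{α,β} ∘ R¹³_{α,γ} ∘ R²³_{β,γ}, where R^{ij} denotes the action of R on the i-th and j-th pair of coordinates of ((x₁,x₂),(y₁,y₂),(z₁,z₂)). -/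
/-! Put `u = x₁ - y₂`, `v = y₁ - z₂`, `a = α - β`, `b = β - γ`. Both sides of the Yang–Baxter
equation shift `z₁`, `y₁`, `x₂` and `y₂` by rational functions of `u, v, a, b`. The shifts of `y₁`
and `x₂` agree by the identity `a/u + b/(u - (a+b)/(v + a/u)) = (a+b)/(u - b/v)`, those of `z₁` and
`y₂` by its image under `u ↔ v`, `(a, b) ↦ (-b, -a)`. -/

/-- The KdV (H₁) lift Yang–Baxter map `R_{α,β}` on `ℂ² × ℂ²`. -/
noncomputable def RH1 (α β : ℂ) (x y : ℂ × ℂ) : (ℂ × ℂ) × (ℂ × ℂ) :=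
  ((y.1 + (α - β) / (x.1 - y.2), y.2), (x.1, x.2 + (α - β) / (x.1 - y.2)))

/-- Action of `R` on factors 1 and 2 of `(ℂ²)³`. -/
noncomputable def R12 (α β : ℂ) (p : (ℂ × ℂ) × (ℂ × ℂ) × (ℂ × ℂ)) :
    (ℂ × ℂ) × (ℂ × ℂ) × (ℂ × ℂ) :=
  ((RH1 α β p.1 p.2.1).1, (RH1 α β p.1 p.2.1).2, p.2.2)

/-- Action of `R` on factors 1 and 3 of `(ℂ²)³`. -/
noncomputable def R13 (α β : ℂ) (p : (ℂ × ℂ) × (ℂ × ℂ) × (ℂ × ℂ)) :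
    (ℂ × ℂ) × (ℂ × ℂ) × (ℂ × ℂ) :=
  ((RH1 α β p.1 p.2.2).1, p.2.1, (RH1 α β p.1 p.2.2).2)

/-- Action of `R` on factors 2 and 3 of `(ℂ²)³`. -/
noncomputable def R23 (α β : ℂ) (p : (ℂ × ℂ) × (ℂ × ℂ) × (ℂ × ℂ)) :
    (ℂ × ℂ) × (ℂ × ℂ) × (ℂ × ℂ) :=
  (p.1, (RH1 α β p.2.1 p.2.2).1, (RH1 α β p.2.1 p.2.2).2)

theorem div_add_div_sub_div_eq_div_sub_div {K : Type*} [Field K] {a b u v : K}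
    (hu : u ≠ 0) (hv : v ≠ 0) (hva : v + a / u ≠ 0) (hub : u - b / v ≠ 0) :
    a / u + b / (u - (a + b) / (v + a / u)) = (a + b) / (u - b / v) := by
  have hva' : u * v + a ≠ 0 := fun h => hva (by field_simp; linear_combination h)
  have hub' : u * v - b ≠ 0 := fun h => hub (by field_simp; linear_combination h)
  have h_inner : u - (a + b) / (v + a / u) = u * (u * v - b) / (u * v + a) := by
    field_simp
    ring
  rw [h_inner]
  field_simp
  ring

theorem yang_baxter_KdV_lift_general (α β γ : ℂ) (p : (ℂ × ℂ) × (ℂ × ℂ) × (ℂ × ℂ))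
    (h1 : p.1.1 ≠ p.2.1.2)
    (h2 : (R12 α β p).1.1 ≠ (R12 α β p).2.2.2)
    (h4 : p.2.1.1 ≠ p.2.2.2)
    (h5 : (R23 β γ p).1.1 ≠ (R23 β γ p).2.2.2) :
    R23 β γ (R13 α γ (R12 α β p)) = R12 α β (R13 α γ (R23 β γ p)) := by
  obtain ⟨⟨x₁, x₂⟩, ⟨y₁, y₂⟩, z₁, z₂⟩ := p
  simp only [R12, R13, R23, RH1] at *
  have hu : x₁ - y₂ ≠ 0 := sub_ne_zero.mpr h1
  have hv : y₁ - z₂ ≠ 0 := sub_ne_zero.mpr h4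
  have hva : y₁ - z₂ + (α - β) / (x₁ - y₂) ≠ 0 := fun h => h2 (by linear_combination h)
  have hub : x₁ - y₂ - (β - γ) / (y₁ - z₂) ≠ 0 := fun h => h5 (by linear_combination h)
  have hshift := div_add_div_sub_div_eq_div_sub_div hu hv hva hub
  have hshift_swap := div_add_div_sub_div_eq_div_sub_div (a := -(β - γ)) (b := -(α - β)) hv hu
    (fun h => hub (by linear_combination h)) (fun h => hva (by linear_combination h))
  refine Prod.ext (Prod.ext ?_ rfl) (Prod.ext (Prod.ext ?_ ?_) (Prod.ext rfl ?_))
  · linear_combination hshift_swap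
  · linear_combination hshift
  · linear_combination hshift_swap
  · linear_combination hshift

/-- The KdV lift satisfies the parametric Yang–Baxter equation
`R²³_{β,γ} ∘ R¹³_{α,γ} ∘ R¹²_{α,β} = R¹²_{α,β} ∘ R¹³_{α,γ} ∘ R²³_{β,γ}`,
under the non-degeneracy conditions at each step. -/
theorem yang_baxter_KdV_lift (α β γ : ℂ) (p : (ℂ × ℂ) × (ℂ × ℂ) × (ℂ × ℂ))
    (h1 : p.1.1 ≠ p.2.1.2)
    (h2 : (R12 α β p).1.1 ≠ (R12 α β p).2.2.2)
    (h3 : (R13 α γ (R12 α β p)).2.1.1 ≠ (R13 α γ (R12 α β p)).2.2.2)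
    (h4 : p.2.1.1 ≠ p.2.2.2)
    (h5 : (R23 β γ p).1.1 ≠ (R23 β γ p).2.2.2)
    (h6 : (R13 α γ (R23 β γ p)).1.1 ≠ (R13 α γ (R23 β γ p)).2.1.2) :
    R23 β γ (R13 α γ (R12 α β p)) = R12 α β (R13 α γ (R23 β γ p)) :=
  yang_baxter_KdV_lift_general α β γ p h1 h2 h4 h5
end

section
/- The map R_{α,β}(x₁,x₂,y₁,y₂) = (y₁ + (α−β)/(x₁−y₂), y₂, x₁, x₂ + (α−β)/(x₁−y₂)) is a Poisson map with respect to the bracket defined by {x₁,x₂} = 1, {y₁,y₂} = 1, and {xᵢ,yⱼ} = 0 for i,j ∈ {1,2}; equivalently, writing (u₁,u₂,v₁,v₂) for the image, the Jacobian relations give {u₁,u₂} = 1, {v₁,v₂} = 1 and {uᵢ,vⱼ} = 0, where the bracket of functions f,g on ℂ⁴ is {f,g} = (∂f/∂x₁)(∂g/∂x₂) − (∂f/∂x₂)(∂g/∂x₁) + (∂f/∂y₁)(∂g/∂y₂) − (∂f/∂y₂)(∂g/∂y₁). -/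
/-- Partial derivative in the first coordinate. -/
noncomputable def d1 (f : ℂ → ℂ → ℂ → ℂ → ℂ) (a b c d : ℂ) : ℂ :=
  deriv (fun t => f t b c d) a

/-- Partial derivative in the second coordinate. -/
noncomputable def d2 (f : ℂ → ℂ → ℂ → ℂ → ℂ) (a b c d : ℂ) : ℂ :=
  deriv (fun t => f a t c d) b

/-- Partial derivative in the third coordinate. -/
noncomputable def d3 (f : ℂ → ℂ → ℂ → ℂ → ℂ) (a b c d : ℂ) : ℂ :=
  deriv (fun t => f a b t d) c

/-- Partial derivative in the fourth coordinate. -/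
noncomputable def d4 (f : ℂ → ℂ → ℂ → ℂ → ℂ) (a b c d : ℂ) : ℂ :=
  deriv (fun t => f a b c t) d

/-- Canonical Poisson bracket on ℂ⁴ with coordinates (x₁,x₂,y₁,y₂):
`{x₁,x₂} = 1`, `{y₁,y₂} = 1`, `{xᵢ,yⱼ} = 0`. -/
noncomputable def pb (f g : ℂ → ℂ → ℂ → ℂ → ℂ) (a b c d : ℂ) : ℂ :=
  (d1 f a b c d * d2 g a b c d - d2 f a b c d * d1 g a b c d) +
  (d3 f a b c d * d4 g a b c d - d4 f a b c d * d3 g a b c d)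

/-!
The map is the swap `(x₁, x₂, y₁, y₂) ↦ (y₁, y₂, x₁, x₂)`, which is Poisson, followed by adding the
same function `g(x₁ - y₂)` to `u₁` and `v₂`. Since `∂/∂x₁ + ∂/∂y₂` annihilates every function of
`x₁ - y₂`, the only bracket the perturbation could spoil, `{u₁, v₂} = ∂u₁/∂x₁ + ∂v₂/∂y₂`, vanishes.
-/

theorem pb_antisymm (f g : ℂ → ℂ → ℂ → ℂ → ℂ) (a b c d : ℂ) :
    pb f g a b c d = -pb g f a b c d := by
  unfold pb
  ring

theorem pb_fourth_coord_right (f : ℂ → ℂ → ℂ → ℂ → ℂ) (a b c d : ℂ) :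
    pb f (fun _ _ _ y₂ => y₂) a b c d = d3 f a b c d := by
  simp [pb, d1, d2, d3, d4]

theorem pb_first_coord_left (g : ℂ → ℂ → ℂ → ℂ → ℂ) (a b c d : ℂ) :
    pb (fun x₁ _ _ _ => x₁) g a b c d = d2 g a b c d := by
  simp [pb, d1, d2, d3, d4]

theorem pb_add_comp_sub (g : ℂ → ℂ) (a b c d : ℂ) :
    pb (fun x₁ _ y₁ y₂ => y₁ + g (x₁ - y₂)) (fun x₁ x₂ _ y₂ => x₂ + g (x₁ - y₂)) a b c d = 0 := by
  simp [pb, d1, d2, d3, d4, deriv_comp_sub_const, deriv_comp_const_sub]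

theorem KdV_lift_Poisson_general (α β : ℂ)
    (u₁ : ℂ → ℂ → ℂ → ℂ → ℂ) (u₂ : ℂ → ℂ → ℂ → ℂ → ℂ)
    (v₁ : ℂ → ℂ → ℂ → ℂ → ℂ) (v₂ : ℂ → ℂ → ℂ → ℂ → ℂ)
    (hu₁ : u₁ = fun x₁ _ y₁ y₂ => y₁ + (α - β) / (x₁ - y₂))
    (hu₂ : u₂ = fun _ _ _ y₂ => y₂)
    (hv₁ : v₁ = fun x₁ _ _ _ => x₁)
    (hv₂ : v₂ = fun x₁ x₂ _ y₂ => x₂ + (α - β) / (x₁ - y₂))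
    (x₁ x₂ y₁ y₂ : ℂ) :
    pb u₁ u₂ x₁ x₂ y₁ y₂ = 1 ∧ pb v₁ v₂ x₁ x₂ y₁ y₂ = 1 ∧
    pb u₁ v₁ x₁ x₂ y₁ y₂ = 0 ∧ pb u₁ v₂ x₁ x₂ y₁ y₂ = 0 ∧
    pb u₂ v₁ x₁ x₂ y₁ y₂ = 0 ∧ pb u₂ v₂ x₁ x₂ y₁ y₂ = 0 := by
  subst hu₁ hu₂ hv₁ hv₂
  refine ⟨?_, ?_, ?_, pb_add_comp_sub (fun s => (α - β) / s) x₁ x₂ y₁ y₂, ?_, ?_⟩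
  · rw [pb_fourth_coord_right]; simp [d3]
  · rw [pb_first_coord_left]; simp [d2]
  · rw [pb_antisymm, pb_first_coord_left]; simp [d2]
  · rw [pb_antisymm, pb_first_coord_left]; simp [d2]
  · rw [pb_antisymm, pb_fourth_coord_right]; simp [d3]

/-- The KdV lift is a Poisson map with respect to the canonical bracket:
the image components satisfy `{u₁,u₂} = 1`, `{v₁,v₂} = 1`, `{uᵢ,vⱼ} = 0`. -/
theorem KdV_lift_Poisson (α β : ℂ)
    (u₁ : ℂ → ℂ → ℂ → ℂ → ℂ) (u₂ : ℂ → ℂ → ℂ → ℂ → ℂ)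
    (v₁ : ℂ → ℂ → ℂ → ℂ → ℂ) (v₂ : ℂ → ℂ → ℂ → ℂ → ℂ)
    (hu₁ : u₁ = fun x₁ _ y₁ y₂ => y₁ + (α - β) / (x₁ - y₂))
    (hu₂ : u₂ = fun _ _ _ y₂ => y₂)
    (hv₁ : v₁ = fun x₁ _ _ _ => x₁)
    (hv₂ : v₂ = fun x₁ x₂ _ y₂ => x₂ + (α - β) / (x₁ - y₂))
    (x₁ x₂ y₁ y₂ : ℂ) (h : x₁ ≠ y₂) :
    pb u₁ u₂ x₁ x₂ y₁ y₂ = 1 ∧ pb v₁ v₂ x₁ x₂ y₁ y₂ = 1 ∧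
    pb u₁ v₁ x₁ x₂ y₁ y₂ = 0 ∧ pb u₁ v₂ x₁ x₂ y₁ y₂ = 0 ∧
    pb u₂ v₁ x₁ x₂ y₁ y₂ = 0 ∧ pb u₂ v₂ x₁ x₂ y₁ y₂ = 0 :=
  KdV_lift_Poisson_general α β u₁ u₂ v₁ v₂ hu₁ hu₂ hv₁ hv₂ x₁ x₂ y₁ y₂
end

section
/- The quad-graph equation Q(w,w₁,w₂,w₁₂;α,β) := (w₁₂ − w)(w₁ − w₂) − (α − β) = 0 is 3-dimensionally consistent: given initial values w, w₁, w₂, w₃ and parameters α, β, γ assigned to the three lattice directions, defining w₁₂, w₁₃, w₂₃ by the equation on the three faces adjacent to w, the three values of w₁₂₃ computed from the equations on the three faces adjacent to w₁₂₃ all coincide (whenever all expressions are well-defined). -/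
/-!
On each face the equation solves to `wᵢⱼ = w + (αᵢ - αⱼ) / (wᵢ - wⱼ)`. The differences of two
such values sharing an index all have the same numerator
`D = α (w₂ - w₃) + β (w₃ - w₁) + γ (w₁ - w₂)`, which is alternating in the simultaneous
permutations of `(α, β, γ)` and `(w₁, w₂, w₃)`. Solving on a face adjacent to `w₁₂₃` therefore
gives `(α w₁ (w₂ - w₃) + β w₂ (w₃ - w₁) + γ w₃ (w₁ - w₂)) / D`, which is symmetric, so the three
faces agree (and the value does not involve `w`).
-/

namespace H1

variable {K : Type*} [Field K]

def step (w x y a b : K) : K := w + (a - b) / (x - y)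

def cornerDenom (a b c x y z : K) : K := a * (y - z) + b * (z - x) + c * (x - y)

def corner (a b c x y z : K) : K :=
  (a * x * (y - z) + b * y * (z - x) + c * z * (x - y)) / cornerDenom a b c x y z

lemma step_comm (w x y a b : K) : step w x y a b = step w y x b a := by
  rw [step, step, ← neg_div_neg_eq, neg_sub, neg_sub]

lemma cornerDenom_swap (a b c x y z : K) : cornerDenom a c b x z y = -cornerDenom a b c x y z := by
  unfold cornerDenom; ring

lemma cornerDenom_cycle (a b c x y z : K) : cornerDenom b c a y z x = cornerDenom a b c x y z := by
  unfold cornerDenom; ring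

lemma corner_swap (a b c x y z : K) : corner a c b x z y = corner a b c x y z := by
  rw [corner, corner, cornerDenom_swap, div_neg, ← neg_div]
  ring

lemma corner_cycle (a b c x y z : K) : corner b c a y z x = corner a b c x y z := by
  rw [corner, corner, cornerDenom_cycle]
  ring

lemma step_sub_step {x y z : K} (hxz : x ≠ z) (hyz : y ≠ z) (w a b c : K) :
    step w x z a c - step w y z b c = cornerDenom a b c x y z / ((x - z) * (y - z)) := by
  have := sub_ne_zero.2 hxz
  have := sub_ne_zero.2 hyz
  unfold step cornerDenom
  field_simp
  ring

lemma step_step_eq_corner {a b c x y z : K} (hxz : x ≠ z) (hyz : y ≠ z)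
    (hD : cornerDenom a b c x y z ≠ 0) (w : K) :
    step z (step w x z a c) (step w y z b c) a b = corner a b c x y z := by
  have := sub_ne_zero.2 hxz
  have := sub_ne_zero.2 hyz
  rw [step, step_sub_step hxz hyz, corner]
  field_simp
  unfold cornerDenom
  ring

end H1

open H1 in
theorem H1_threeD_consistent_general (α β γ w w₁ w₂ w₃ w₁₂ w₁₃ w₂₃ : ℂ)
    (h12 : w₁ - w₂ ≠ 0) (h13 : w₁ - w₃ ≠ 0) (h23 : w₂ - w₃ ≠ 0)
    (hw12 : w₁₂ = w + (α - β) / (w₁ - w₂))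
    (hw13 : w₁₃ = w + (α - γ) / (w₁ - w₃))
    (hw23 : w₂₃ = w + (β - γ) / (w₂ - w₃))
    (h1 : w₁₃ - w₂₃ ≠ 0) :
    w₃ + (α - β) / (w₁₃ - w₂₃) = w₂ + (α - γ) / (w₁₂ - w₂₃) ∧
    w₂ + (α - γ) / (w₁₂ - w₂₃) = w₁ + (β - γ) / (w₁₂ - w₁₃) := by
  change w₁₂ = step w w₁ w₂ α β at hw12
  change w₁₃ = step w w₁ w₃ α γ at hw13
  change w₂₃ = step w w₂ w₃ β γ at hw23
  rw [sub_ne_zero] at h12 h13 h23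
  have hD : cornerDenom α β γ w₁ w₂ w₃ ≠ 0 := by
    rw [hw13, hw23, step_sub_step h13 h23] at h1
    exact left_ne_zero_of_mul h1
  have face₃ := step_step_eq_corner h13 h23 hD w
  have face₂ := step_step_eq_corner (a := α) (b := γ) (c := β) h12 h23.symm
    (by rwa [cornerDenom_swap, neg_ne_zero]) w
  have face₁ := step_step_eq_corner (a := β) (b := γ) (c := α) h12.symm h13.symm
    (by rwa [cornerDenom_cycle]) w
  rw [step_comm w w₃, corner_swap] at face₂
  rw [step_comm w w₂, step_comm w w₃, corner_cycle] at face₁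
  rw [hw12, hw13, hw23]
  exact ⟨face₃.trans face₂.symm, face₂.trans face₁.symm⟩

/-- 3D consistency of the H₁ (KdV) equation `(w₁₂ − w)(w₁ − w₂) = α − β`,
equivalently `w₁₂ = w + (α−β)/(w₁−w₂)`.  The three ways of computing `w₁₂₃`
coincide whenever all expressions are well-defined. -/
theorem H1_threeD_consistent (α β γ w w₁ w₂ w₃ w₁₂ w₁₃ w₂₃ : ℂ)
    (h12 : w₁ - w₂ ≠ 0) (h13 : w₁ - w₃ ≠ 0) (h23 : w₂ - w₃ ≠ 0)
    (hw12 : w₁₂ = w + (α - β) / (w₁ - w₂))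
    (hw13 : w₁₃ = w + (α - γ) / (w₁ - w₃))
    (hw23 : w₂₃ = w + (β - γ) / (w₂ - w₃))
    (h1 : w₁₃ - w₂₃ ≠ 0) (h2 : w₁₂ - w₂₃ ≠ 0) (h3 : w₁₂ - w₁₃ ≠ 0) :
    w₃ + (α - β) / (w₁₃ - w₂₃) = w₂ + (α - γ) / (w₁₂ - w₂₃) ∧
    w₂ + (α - γ) / (w₁₂ - w₂₃) = w₁ + (β - γ) / (w₁₂ - w₁₃) :=
  H1_threeD_consistent_general α β γ w w₁ w₂ w₃ w₁₂ w₁₃ w₂₃ h12 h13 h23 hw12 hw13 hw23 h1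
end

section
/- The multiparametric cross-ratio equation α(β₁w − β₂w₂)(β₁w₁ − β₂w₁₂) − β(α₁w − α₂w₁)(α₁w₂ − α₂w₁₂) = 0, with vector parameters ᾱ = (α,α₁,α₂) and β̄ = (β,β₁,β₂), is 3-dimensionally consistent: solving for w₁₂, w₁₃, w₂₃ on the three faces of a cube adjacent to w (with parameter triples ᾱ, β̄, γ̄ = (γ,γ₁,γ₂) attached to the three directions), the three resulting values for w₁₂₃ coincide generically. -/
/-!
Each face equation is affine in its fourth vertex, `Qcr = faceNum - w₁₂ * faceDen`, so the
bottom vertices are `faceNum / faceDen`. Substituting these into the top faces and clearing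
denominators (the face polynomials are homogeneous in the three known vertices), each of the
three values of `w₁₂₃` becomes a quotient of two explicit polynomials in the initial data and
parameters. Consistency is then a pair of polynomial identities between these quotients, and
genericity means that the three denominators do not vanish.
-/

/-- The multiparametric cross-ratio polynomial. -/
def Qcr (w w₁ w₂ w₁₂ α α₁ α₂ β β₁ β₂ : ℂ) : ℂ :=
  α * (β₁ * w - β₂ * w₂) * (β₁ * w₁ - β₂ * w₁₂) -
  β * (α₁ * w - α₂ * w₁) * (α₁ * w₂ - α₂ * w₁₂)

section Face

variable {R : Type*} [CommRing R]

def faceNum (w w₁ w₂ α α₁ α₂ β β₁ β₂ : R) : R :=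
  α * β₁ * w₁ * (β₁ * w - β₂ * w₂) - β * α₁ * w₂ * (α₁ * w - α₂ * w₁)

def faceDen (w w₁ w₂ α α₁ α₂ β β₁ β₂ : R) : R :=
  α * β₂ * (β₁ * w - β₂ * w₂) - β * α₂ * (α₁ * w - α₂ * w₁)

/-- `faceNum` and `faceDen` with the adjacent vertices given as fractions `np / p` and `nq / q`,
multiplied through by `p * q`. -/
def liftedFaceNum (W np p nq q A A₁ A₂ B B₁ B₂ : R) : R :=
  A * B₁ * np * (B₁ * W * q - B₂ * nq) - B * A₁ * nq * (A₁ * W * p - A₂ * np)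

def liftedFaceDen (W np p nq q A A₁ A₂ B B₁ B₂ : R) : R :=
  A * B₂ * (B₁ * W * p * q - B₂ * nq * p) - B * A₂ * (A₁ * W * p * q - A₂ * np * q)

lemma liftedFaceNum_mul (W W₁ W₂ p q A A₁ A₂ B B₁ B₂ : R) :
    liftedFaceNum W (W₁ * p) p (W₂ * q) q A A₁ A₂ B B₁ B₂ =
      p * q * faceNum W W₁ W₂ A A₁ A₂ B B₁ B₂ := by
  simp only [liftedFaceNum, faceNum]; ring

lemma liftedFaceDen_mul (W W₁ W₂ p q A A₁ A₂ B B₁ B₂ : R) :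
    liftedFaceDen W (W₁ * p) p (W₂ * q) q A A₁ A₂ B B₁ B₂ =
      p * q * faceDen W W₁ W₂ A A₁ A₂ B B₁ B₂ := by
  simp only [liftedFaceDen, faceDen]; ring

end Face

lemma Qcr_eq_faceNum_sub (w w₁ w₂ w₁₂ α α₁ α₂ β β₁ β₂ : ℂ) :
    Qcr w w₁ w₂ w₁₂ α α₁ α₂ β β₁ β₂ =
      faceNum w w₁ w₂ α α₁ α₂ β β₁ β₂ - w₁₂ * faceDen w w₁ w₂ α α₁ α₂ β β₁ β₂ := by
  simp only [Qcr, faceNum, faceDen]; ring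

lemma mul_faceDen_of_Qcr_eq_zero {w w₁ w₂ w₁₂ α α₁ α₂ β β₁ β₂ : ℂ}
    (h : Qcr w w₁ w₂ w₁₂ α α₁ α₂ β β₁ β₂ = 0) :
    w₁₂ * faceDen w w₁ w₂ α α₁ α₂ β β₁ β₂ = faceNum w w₁ w₂ α α₁ α₂ β β₁ β₂ := by
  rw [Qcr_eq_faceNum_sub, sub_eq_zero] at h
  exact h.symm

lemma mul_liftedFaceDen_of_Qcr_eq_zero {W W₁ W₂ u np p nq q A A₁ A₂ B B₁ B₂ : ℂ}
    (h : Qcr W W₁ W₂ u A A₁ A₂ B B₁ B₂ = 0) (hp : W₁ * p = np) (hq : W₂ * q = nq) :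
    u * liftedFaceDen W np p nq q A A₁ A₂ B B₁ B₂ =
      liftedFaceNum W np p nq q A A₁ A₂ B B₁ B₂ := by
  subst hp hq
  rw [liftedFaceDen_mul, liftedFaceNum_mul, ← mul_faceDen_of_Qcr_eq_zero h]
  ring

section Cube

variable {R : Type*} [CommRing R] (w w₁ w₂ w₃ α α₁ α₂ β β₁ β₂ γ γ₁ γ₂ : R)

/-! The index `k` of `apexNumₖ`, `apexDenₖ` is the direction normal to the top face used. -/

def apexNum₃ : R :=
  liftedFaceNum w₃ (faceNum w w₁ w₃ α α₁ α₂ γ γ₁ γ₂) (faceDen w w₁ w₃ α α₁ α₂ γ γ₁ γ₂)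
    (faceNum w w₂ w₃ β β₁ β₂ γ γ₁ γ₂) (faceDen w w₂ w₃ β β₁ β₂ γ γ₁ γ₂) α α₁ α₂ β β₁ β₂

def apexDen₃ : R :=
  liftedFaceDen w₃ (faceNum w w₁ w₃ α α₁ α₂ γ γ₁ γ₂) (faceDen w w₁ w₃ α α₁ α₂ γ γ₁ γ₂)
    (faceNum w w₂ w₃ β β₁ β₂ γ γ₁ γ₂) (faceDen w w₂ w₃ β β₁ β₂ γ γ₁ γ₂) α α₁ α₂ β β₁ β₂

def apexNum₂ : R :=
  liftedFaceNum w₂ (faceNum w w₁ w₂ α α₁ α₂ β β₁ β₂) (faceDen w w₁ w₂ α α₁ α₂ β β₁ β₂)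
    (faceNum w w₂ w₃ β β₁ β₂ γ γ₁ γ₂) (faceDen w w₂ w₃ β β₁ β₂ γ γ₁ γ₂) α α₁ α₂ γ γ₁ γ₂

def apexDen₂ : R :=
  liftedFaceDen w₂ (faceNum w w₁ w₂ α α₁ α₂ β β₁ β₂) (faceDen w w₁ w₂ α α₁ α₂ β β₁ β₂)
    (faceNum w w₂ w₃ β β₁ β₂ γ γ₁ γ₂) (faceDen w w₂ w₃ β β₁ β₂ γ γ₁ γ₂) α α₁ α₂ γ γ₁ γ₂

def apexNum₁ : R :=
  liftedFaceNum w₁ (faceNum w w₁ w₂ α α₁ α₂ β β₁ β₂) (faceDen w w₁ w₂ α α₁ α₂ β β₁ β₂)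
    (faceNum w w₁ w₃ α α₁ α₂ γ γ₁ γ₂) (faceDen w w₁ w₃ α α₁ α₂ γ γ₁ γ₂) β β₁ β₂ γ γ₁ γ₂

def apexDen₁ : R :=
  liftedFaceDen w₁ (faceNum w w₁ w₂ α α₁ α₂ β β₁ β₂) (faceDen w w₁ w₂ α α₁ α₂ β β₁ β₂)
    (faceNum w w₁ w₃ α α₁ α₂ γ γ₁ γ₂) (faceDen w w₁ w₃ α α₁ α₂ γ γ₁ γ₂) β β₁ β₂ γ γ₁ γ₂

lemma apexNum₃_mul_apexDen₂ :
    apexNum₃ w w₁ w₂ w₃ α α₁ α₂ β β₁ β₂ γ γ₁ γ₂ * apexDen₂ w w₁ w₂ w₃ α α₁ α₂ β β₁ β₂ γ γ₁ γ₂ =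
      apexNum₂ w w₁ w₂ w₃ α α₁ α₂ β β₁ β₂ γ γ₁ γ₂ *
        apexDen₃ w w₁ w₂ w₃ α α₁ α₂ β β₁ β₂ γ γ₁ γ₂ := by
  simp only [apexNum₃, apexDen₂, apexNum₂, apexDen₃, liftedFaceNum, liftedFaceDen, faceNum,
    faceDen]
  ring

lemma apexNum₂_mul_apexDen₁ :
    apexNum₂ w w₁ w₂ w₃ α α₁ α₂ β β₁ β₂ γ γ₁ γ₂ * apexDen₁ w w₁ w₂ w₃ α α₁ α₂ β β₁ β₂ γ γ₁ γ₂ =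
      apexNum₁ w w₁ w₂ w₃ α α₁ α₂ β β₁ β₂ γ γ₁ γ₂ *
        apexDen₂ w w₁ w₂ w₃ α α₁ α₂ β β₁ β₂ γ γ₁ γ₂ := by
  simp only [apexNum₂, apexDen₁, apexNum₁, apexDen₂, liftedFaceNum, liftedFaceDen, faceNum,
    faceDen]
  ring

end Cube

open MvPolynomial in
noncomputable def apexDenProduct : MvPolynomial (Fin 13) ℂ :=
  apexDen₃ (X 0) (X 1) (X 2) (X 3) (X 4) (X 5) (X 6) (X 7) (X 8) (X 9) (X 10) (X 11) (X 12) *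
  apexDen₂ (X 0) (X 1) (X 2) (X 3) (X 4) (X 5) (X 6) (X 7) (X 8) (X 9) (X 10) (X 11) (X 12) *
  apexDen₁ (X 0) (X 1) (X 2) (X 3) (X 4) (X 5) (X 6) (X 7) (X 8) (X 9) (X 10) (X 11) (X 12)

lemma eval_apexDenProduct (w w₁ w₂ w₃ α α₁ α₂ β β₁ β₂ γ γ₁ γ₂ : ℂ) :
    MvPolynomial.eval ![w, w₁, w₂, w₃, α, α₁, α₂, β, β₁, β₂, γ, γ₁, γ₂] apexDenProduct =
      apexDen₃ w w₁ w₂ w₃ α α₁ α₂ β β₁ β₂ γ γ₁ γ₂ * apexDen₂ w w₁ w₂ w₃ α α₁ α₂ β β₁ β₂ γ γ₁ γ₂ *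
        apexDen₁ w w₁ w₂ w₃ α α₁ α₂ β β₁ β₂ γ γ₁ γ₂ := by
  simp [apexDenProduct, apexDen₃, apexDen₂, apexDen₁, liftedFaceDen, faceNum, faceDen]

lemma apexDenProduct_ne_zero : apexDenProduct ≠ 0 := by
  intro h
  have := eval_apexDenProduct 1 2 1 1 3 2 3 3 3 1 2 1 3
  rw [h, map_zero] at this
  norm_num [apexDen₃, apexDen₂, apexDen₁, liftedFaceDen, faceNum, faceDen] at this

/-- 3D consistency of the multiparametric cross-ratio equation: generically
(outside the zero set of a nonzero polynomial `P` in the initial data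
`w,w₁,w₂,w₃` and the parameter triples `ᾱ,β̄,γ̄`), if `w₁₂,w₁₃,w₂₃` satisfy
the three bottom face equations and `a,b,c` are the values of `w₁₂₃` computed
from the three top face equations, then `a = b = c`. -/
theorem multiparametric_crossratio_threeD_consistent :
    ∃ P : MvPolynomial (Fin 13) ℂ, P ≠ 0 ∧
      ∀ w w₁ w₂ w₃ α α₁ α₂ β β₁ β₂ γ γ₁ γ₂ w₁₂ w₁₃ w₂₃ a b c : ℂ,
        MvPolynomial.eval
          (![w, w₁, w₂, w₃, α, α₁, α₂, β, β₁, β₂, γ, γ₁, γ₂] : Fin 13 → ℂ) P ≠ 0 →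
        Qcr w w₁ w₂ w₁₂ α α₁ α₂ β β₁ β₂ = 0 →
        Qcr w w₁ w₃ w₁₃ α α₁ α₂ γ γ₁ γ₂ = 0 →
        Qcr w w₂ w₃ w₂₃ β β₁ β₂ γ γ₁ γ₂ = 0 →
        Qcr w₃ w₁₃ w₂₃ a α α₁ α₂ β β₁ β₂ = 0 →
        Qcr w₂ w₁₂ w₂₃ b α α₁ α₂ γ γ₁ γ₂ = 0 →
        Qcr w₁ w₁₂ w₁₃ c β β₁ β₂ γ γ₁ γ₂ = 0 →
        a = b ∧ b = c := by
  refine ⟨apexDenProduct, apexDenProduct_ne_zero, ?_⟩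
  intro w w₁ w₂ w₃ α α₁ α₂ β β₁ β₂ γ γ₁ γ₂ w₁₂ w₁₃ w₂₃ a b c hP h₁₂ h₁₃ h₂₃ ha hb hc
  rw [eval_apexDenProduct] at hP
  obtain ⟨⟨hd₃, hd₂⟩, hd₁⟩ := by simpa only [mul_ne_zero_iff] using hP
  have hw₁₂ := mul_faceDen_of_Qcr_eq_zero h₁₂
  have hw₁₃ := mul_faceDen_of_Qcr_eq_zero h₁₃
  have hw₂₃ := mul_faceDen_of_Qcr_eq_zero h₂₃
  have ha' := eq_div_of_mul_eq hd₃ (mul_liftedFaceDen_of_Qcr_eq_zero ha hw₁₃ hw₂₃)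
  have hb' := eq_div_of_mul_eq hd₂ (mul_liftedFaceDen_of_Qcr_eq_zero hb hw₁₂ hw₂₃)
  have hc' := eq_div_of_mul_eq hd₁ (mul_liftedFaceDen_of_Qcr_eq_zero hc hw₁₂ hw₁₃)
  refine ⟨?_, ?_⟩
  · rw [ha', hb', div_eq_div_iff hd₃ hd₂]
    exact apexNum₃_mul_apexDen₂ ..
  · rw [hb', hc', div_eq_div_iff hd₂ hd₁]
    exact apexNum₂_mul_apexDen₁ ..
end

section
/- Let L(x₁,x₂,ᾱ) be the 2×2 matrix with entries L₁₁ = α₁ζ + αx₂/(α₁x₁ − α₂x₂), L₁₂ = −αx₁x₂/(α₁x₁ − α₂x₂), L₂₁ = α/(α₁x₁ − α₂x₂), L₂₂ = α₂ζ − αx₁/(α₁x₁ − α₂x₂), where ᾱ = (α,α₁,α₂) and ζ is a spectral parameter. If w₂ satisfies the multiparametric cross-ratio equation α(β₁w − β₂w₂)(β₁w₁ − β₂w₁₂) = β(α₁w − α₂w₁)(α₁w₂ − α₂w₁₂), then for all ζ the Lax equation L(w₂,w₁₂,ᾱ) · L(w,w₂,β̄) = L(w₁,w₁₂,β̄) ·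 L(w,w₁,ᾱ) holds (assuming all denominators are nonzero). -/
/-!
Write `L(x₁,x₂,ᾱ) = ζ • diag(α₁,α₂) + (α / (α₁x₁ - α₂x₂)) • (x₂,1)ᵀ(1,-x₁)`. In a product
`L(y,z,ᾱ) L(x,y,β̄)` the two rank-one parts annihilate each other because `(1,-y)·(y,1) = 0`, so
both sides of the Lax equation are `ζ² • diag(α₁β₁, α₂β₂)` plus `ζ` times a matrix independent
of `ζ`. After clearing denominators, each entry of the difference of these two matrices is a
multiple of the cross-ratio polynomial.
-/

open Matrix

/-- Lax matrix of the multiparametric cross-ratio equation,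
with parameter triple `ᾱ = (α, α₁, α₂)` and spectral parameter `ζ`. -/
noncomputable def Lcr (x₁ x₂ α α₁ α₂ ζ : ℂ) : Matrix (Fin 2) (Fin 2) ℂ :=
  !![α₁ * ζ + α * x₂ / (α₁ * x₁ - α₂ * x₂), -(α * x₁ * x₂) / (α₁ * x₁ - α₂ * x₂);
     α / (α₁ * x₁ - α₂ * x₂), α₂ * ζ - α * x₁ / (α₁ * x₁ - α₂ * x₂)]

lemma Lcr_eq_smul_diagonal_add_smul_vecMulVec (x₁ x₂ α α₁ α₂ ζ : ℂ) :
    Lcr x₁ x₂ α α₁ α₂ ζ = ζ • diagonal ![α₁, α₂]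
      + (α / (α₁ * x₁ - α₂ * x₂)) • vecMulVec ![x₂, 1] ![1, -x₁] := by
  ext i j
  fin_cases i <;> fin_cases j <;>
    simp only [Lcr, vecMulVec, Fin.zero_eta, Fin.mk_one, Fin.isValue, of_apply, cons_val',
      cons_val_zero, cons_val_one, cons_val_fin_one, Matrix.add_apply, Matrix.smul_apply,
      diagonal_apply_eq, diagonal_apply_ne, ne_eq, zero_ne_one, one_ne_zero, not_false_eq_true,
      smul_of, Pi.smul_apply, smul_eq_mul] <;>
    ring

/-- The coefficient of `ζ` in `Lcr y z α α₁ α₂ ζ * Lcr x y β β₁ β₂ ζ`. -/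
noncomputable def laxLinearCoeff (x y z α α₁ α₂ β β₁ β₂ : ℂ) : Matrix (Fin 2) (Fin 2) ℂ :=
  (β / (β₁ * x - β₂ * y)) • (diagonal ![α₁, α₂] * vecMulVec ![y, 1] ![1, -x])
    + (α / (α₁ * y - α₂ * z)) • (vecMulVec ![z, 1] ![1, -y] * diagonal ![β₁, β₂])

lemma Lcr_mul_Lcr (x y z α α₁ α₂ β β₁ β₂ ζ : ℂ) :
    Lcr y z α α₁ α₂ ζ * Lcr x y β β₁ β₂ ζ
      = ζ ^ 2 • (diagonal ![α₁, α₂] * diagonal ![β₁, β₂])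
        + ζ • laxLinearCoeff x y z α α₁ α₂ β β₁ β₂ := by
  have hnil : vecMulVec ![z, 1] ![1, -y] * vecMulVec ![y, 1] ![1, -x] = 0 := by
    rw [vecMulVec_mul_vecMulVec]
    simp
  simp only [Lcr_eq_smul_diagonal_add_smul_vecMulVec, laxLinearCoeff, add_mul, mul_add,
    smul_mul_smul_comm, mul_smul, hnil, smul_zero]
  module

lemma laxLinearCoeff_eq_of_crossratio {w w₁ w₂ w₁₂ α α₁ α₂ β β₁ β₂ : ℂ}
    (hQ : α * (β₁ * w - β₂ * w₂) * (β₁ * w₁ - β₂ * w₁₂)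
        = β * (α₁ * w - α₂ * w₁) * (α₁ * w₂ - α₂ * w₁₂))
    (hd1 : α₁ * w₂ - α₂ * w₁₂ ≠ 0) (hd2 : β₁ * w - β₂ * w₂ ≠ 0)
    (hd3 : β₁ * w₁ - β₂ * w₁₂ ≠ 0) (hd4 : α₁ * w - α₂ * w₁ ≠ 0) :
    laxLinearCoeff w w₂ w₁₂ α α₁ α₂ β β₁ β₂ = laxLinearCoeff w w₁ w₁₂ β β₁ β₂ α α₁ α₂ := by
  ext i j
  fin_cases i <;> fin_cases j <;>
    simp only [laxLinearCoeff, vecMulVec, Fin.zero_eta, Fin.mk_one, Fin.isValue,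
      Matrix.add_apply, Matrix.smul_apply, diagonal_mul, mul_diagonal, of_apply, cons_val_zero,
      cons_val_one, cons_val_fin_one, smul_eq_mul, mul_one, one_mul, mul_neg, neg_mul,
      div_mul_eq_mul_div, neg_div'] <;>
    rw [div_add_div _ _ hd2 hd1, div_add_div _ _ hd4 hd3,
      div_eq_div_iff (mul_ne_zero hd2 hd1) (mul_ne_zero hd4 hd3)]
  · linear_combination (w * w₁₂ - w₁ * w₂) * α₁ * β₁ * hQ
  · linear_combination (w₁ * w₂ * w₁₂ * α₂ * β₂ - w * w₂ * w₁₂ * α₁ * β₂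
        - w * w₁ * w₁₂ * α₂ * β₁ + w * w₁ * w₂ * α₁ * β₁) * hQ
  · linear_combination (α₁ * β₁ * w - α₂ * β₁ * w₁ - α₁ * β₂ * w₂ + α₂ * β₂ * w₁₂) * hQ
  · linear_combination (w₁ * w₂ - w * w₁₂) * α₂ * β₂ * hQ

/-- If `w₂` satisfies the multiparametric cross-ratio equation, then the Lax
equation `L(w₂,w₁₂,ᾱ)·L(w,w₂,β̄) = L(w₁,w₁₂,β̄)·L(w,w₁,ᾱ)` holds for all ζ
(assuming all denominators are nonzero). -/
theorem multiparametric_crossratio_Lax (w w₁ w₂ w₁₂ α α₁ α₂ β β₁ β₂ : ℂ)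
    (hQ : α * (β₁ * w - β₂ * w₂) * (β₁ * w₁ - β₂ * w₁₂)
        = β * (α₁ * w - α₂ * w₁) * (α₁ * w₂ - α₂ * w₁₂))
    (hd1 : α₁ * w₂ - α₂ * w₁₂ ≠ 0)
    (hd2 : β₁ * w - β₂ * w₂ ≠ 0)
    (hd3 : β₁ * w₁ - β₂ * w₁₂ ≠ 0)
    (hd4 : α₁ * w - α₂ * w₁ ≠ 0) :
    ∀ ζ : ℂ, Lcr w₂ w₁₂ α α₁ α₂ ζ * Lcr w w₂ β β₁ β₂ ζ
           = Lcr w₁ w₁₂ β β₁ β₂ ζ * Lcr w w₁ α α₁ α₂ ζ := by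
  intro ζ
  rw [Lcr_mul_Lcr, Lcr_mul_Lcr, laxLinearCoeff_eq_of_crossratio hQ hd1 hd2 hd3 hd4,
    (commute_diagonal _ _).eq]
end

section
/- Let F(x,x₁,x₂,α,β) = x + (α−β)/(x₁−x₂) (from the H₁ equation). Define the (2,2) periodic reduction map S_{α,β}(x₁,x₂,x₃,x₄) = (x₁',x₂',x₃',x₄') by x₂' = F(x₂,x₃,x₁,α,β), x₄' = F(x₄,x₁,x₃,α,β), x₃' = F(x₃,x₄',x₂',α,β), x₁' = F(x₁,x₂',x₄',α,β). Then S_{α,β} preserves the symplectic form dx₁∧dx₂ + dx₃∧dx₄; equivalently, S_{α,β} is a Poisson map for the bracket {x₁,x₂}=1, {x₃,x₄}=1, all other coordinate brackets zero. -/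
/-- F from the H₁ equation: `F(x,x₁,x₂,α,β) = x + (α−β)/(x₁−x₂)`. -/
noncomputable def FH1 (α β x x₁ x₂ : ℂ) : ℂ := x + (α - β) / (x₁ - x₂)

noncomputable def X2' (α β x₁ x₂ x₃ x₄ : ℂ) : ℂ := FH1 α β x₂ x₃ x₁
noncomputable def X4' (α β x₁ x₂ x₃ x₄ : ℂ) : ℂ := FH1 α β x₄ x₁ x₃
noncomputable def X3' (α β x₁ x₂ x₃ x₄ : ℂ) : ℂ :=
  FH1 α β x₃ (X4' α β x₁ x₂ x₃ x₄) (X2' α β x₁ x₂ x₃ x₄)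
noncomputable def X1' (α β x₁ x₂ x₃ x₄ : ℂ) : ℂ :=
  FH1 α β x₁ (X2' α β x₁ x₂ x₃ x₄) (X4' α β x₁ x₂ x₃ x₄)

/-!
The map is a composite of two shears: `(x₂, x₄) ↦ (x₂ + k, x₄ - k)` with `k = (α-β)/(x₃-x₁)`,
followed by `(x₁, x₃) ↦ (x₁ + l, x₃ - l)` with `l = (α-β)/(x₂'-x₄')`. By the chain rule the
differentials of the new coordinates arise from `dx₁, …, dx₄` by the linear shears
`IsDarbouxFrame.shear_momenta` and `IsDarbouxFrame.shear_positions`, which send Darboux frames of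
any alternating form to Darboux frames, and `pb` is the canonical form evaluated on differentials.
-/

section DarbouxFrame

variable {R M : Type*} [CommRing R] [AddCommGroup M] [Module R M]

def IsDarbouxFrame (ω : LinearMap.BilinForm R M) (q₁ p₁ q₂ p₂ : M) : Prop :=
  ω q₁ p₁ = 1 ∧ ω q₂ p₂ = 1 ∧ ω q₁ q₂ = 0 ∧ ω q₁ p₂ = 0 ∧ ω p₁ q₂ = 0 ∧ ω p₁ p₂ = 0

namespace IsDarbouxFrame

variable {ω : LinearMap.BilinForm R M} {q₁ p₁ q₂ p₂ : M}

theorem shear_momenta (h : IsDarbouxFrame ω q₁ p₁ q₂ p₂) (hω : ω.IsAlt) (k : R) :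
    IsDarbouxFrame ω q₁ (p₁ - k • (q₂ - q₁)) q₂ (p₂ - k • (q₁ - q₂)) := by
  obtain ⟨h₁, h₂, hq, hqp, hpq, hp⟩ := h
  have h₁' : ω p₁ q₁ = -1 := by rw [← hω.neg_eq, h₁]
  have hq' : ω q₂ q₁ = 0 := by rw [← hω.neg_eq, hq, neg_zero]
  refine ⟨?_, ?_, ?_, ?_, ?_, ?_⟩ <;>
    simp only [map_sub, map_smul, LinearMap.sub_apply, LinearMap.smul_apply, smul_eq_mul,
      hω.self_eq_zero, h₁, h₂, hq, hqp, hpq, hp, h₁', hq'] <;> ring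

theorem shear_positions (h : IsDarbouxFrame ω q₁ p₁ q₂ p₂) (hω : ω.IsAlt) (k : R) :
    IsDarbouxFrame ω (q₁ - k • (p₁ - p₂)) p₁ (q₂ - k • (p₂ - p₁)) p₂ := by
  obtain ⟨h₁, h₂, hq, hqp, hpq, hp⟩ := h
  have h₂' : ω p₂ q₂ = -1 := by rw [← hω.neg_eq, h₂]
  have hp' : ω p₂ p₁ = 0 := by rw [← hω.neg_eq, hp, neg_zero]
  refine ⟨?_, ?_, ?_, ?_, ?_, ?_⟩ <;>
    simp only [map_sub, map_smul, LinearMap.sub_apply, LinearMap.smul_apply, smul_eq_mul,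
      hω.self_eq_zero, h₁, h₂, hq, hqp, hpq, hp, h₂', hp'] <;> ring

end IsDarbouxFrame

end DarbouxFrame

def canonicalSymplecticForm : LinearMap.BilinForm ℂ (Fin 4 → ℂ) :=
  LinearMap.mk₂ ℂ (fun u v => u 0 * v 1 - u 1 * v 0 + (u 2 * v 3 - u 3 * v 2))
    (fun _ _ _ => by simp only [Pi.add_apply]; ring)
    (fun _ _ _ => by simp only [Pi.smul_apply, smul_eq_mul]; ring)
    (fun _ _ _ => by simp only [Pi.add_apply]; ring)
    (fun _ _ _ => by simp only [Pi.smul_apply, smul_eq_mul]; ring)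

theorem canonicalSymplecticForm_isAlt : canonicalSymplecticForm.IsAlt := fun u => by
  simp only [canonicalSymplecticForm, LinearMap.mk₂_apply]; ring

theorem isDarbouxFrame_single : IsDarbouxFrame canonicalSymplecticForm
    (Pi.single 0 1) (Pi.single 1 1) (Pi.single 2 1) (Pi.single 3 1) := by
  refine ⟨?_, ?_, ?_, ?_, ?_, ?_⟩ <;> simp [canonicalSymplecticForm]

def HasPartialDerivsAt (f : ℂ → ℂ → ℂ → ℂ → ℂ) (D : Fin 4 → ℂ) (a b c d : ℂ) : Prop :=
  HasDerivAt (fun t => f t b c d) (D 0) a ∧ HasDerivAt (fun t => f a t c d) (D 1) b ∧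
    HasDerivAt (fun t => f a b t d) (D 2) c ∧ HasDerivAt (fun t => f a b c t) (D 3) d

theorem HasPartialDerivsAt.pb_eq {f g : ℂ → ℂ → ℂ → ℂ → ℂ} {Df Dg : Fin 4 → ℂ} {a b c d : ℂ}
    (hf : HasPartialDerivsAt f Df a b c d) (hg : HasPartialDerivsAt g Dg a b c d) :
    pb f g a b c d = canonicalSymplecticForm Df Dg := by
  simp only [pb, d1, d2, d3, d4, hf.1.deriv, hf.2.1.deriv, hf.2.2.1.deriv, hf.2.2.2.deriv,
    hg.1.deriv, hg.2.1.deriv, hg.2.2.1.deriv, hg.2.2.2.deriv, canonicalSymplecticForm,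
    LinearMap.mk₂_apply]

theorem hasPartialDerivsAt_coord (i : Fin 4) (a b c d : ℂ) :
    HasPartialDerivsAt (fun a b c d => ![a, b, c, d] i) (Pi.single i 1) a b c d := by
  fin_cases i <;> refine ⟨?_, ?_, ?_, ?_⟩ <;> simp [hasDerivAt_id', hasDerivAt_const]

theorem HasDerivAt.fH1 {α β t u' v' w' : ℂ} {u v w : ℂ → ℂ} (hu : HasDerivAt u u' t)
    (hv : HasDerivAt v v' t) (hw : HasDerivAt w w' t) (h : v t ≠ w t) :
    HasDerivAt (fun s => FH1 α β (u s) (v s) (w s))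
      (u' - (α - β) / (v t - w t) ^ 2 * (v' - w')) t :=
  (hu.add ((hasDerivAt_const t (α - β)).div (hv.sub hw) (sub_ne_zero.mpr h))).congr_deriv
    (by simp only [Pi.sub_apply]; ring)

theorem HasPartialDerivsAt.fH1 {α β a b c d : ℂ} {u v w : ℂ → ℂ → ℂ → ℂ → ℂ}
    {U V W : Fin 4 → ℂ} (hu : HasPartialDerivsAt u U a b c d)
    (hv : HasPartialDerivsAt v V a b c d) (hw : HasPartialDerivsAt w W a b c d)
    (h : v a b c d ≠ w a b c d) :
    HasPartialDerivsAt (fun a b c d => FH1 α β (u a b c d) (v a b c d) (w a b c d))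
      (U - ((α - β) / (v a b c d - w a b c d) ^ 2) • (V - W)) a b c d :=
  ⟨hu.1.fH1 hv.1 hw.1 h, hu.2.1.fH1 hv.2.1 hw.2.1 h, hu.2.2.1.fH1 hv.2.2.1 hw.2.2.1 h,
    hu.2.2.2.fH1 hv.2.2.2 hw.2.2.2 h⟩

/-- The (2,2) periodic reduction of H₁ is a Poisson map for the canonical
bracket `{x₁,x₂} = 1`, `{x₃,x₄} = 1`, equivalently it preserves the symplectic
form `dx₁∧dx₂ + dx₃∧dx₄`. -/
theorem H1_reduction_Poisson (α β x₁ x₂ x₃ x₄ : ℂ)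
    (h₁ : x₁ ≠ x₃)
    (h₂ : X2' α β x₁ x₂ x₃ x₄ ≠ X4' α β x₁ x₂ x₃ x₄) :
    pb (X1' α β) (X2' α β) x₁ x₂ x₃ x₄ = 1 ∧
    pb (X3' α β) (X4' α β) x₁ x₂ x₃ x₄ = 1 ∧
    pb (X1' α β) (X3' α β) x₁ x₂ x₃ x₄ = 0 ∧
    pb (X1' α β) (X4' α β) x₁ x₂ x₃ x₄ = 0 ∧
    pb (X2' α β) (X3' α β) x₁ x₂ x₃ x₄ = 0 ∧
    pb (X2' α β) (X4' α β) x₁ x₂ x₃ x₄ = 0 := by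
  have e (i : Fin 4) := hasPartialDerivsAt_coord i x₁ x₂ x₃ x₄
  have g₂ : HasPartialDerivsAt (X2' α β) _ x₁ x₂ x₃ x₄ := (e 1).fH1 (e 2) (e 0) h₁.symm
  have g₄ : HasPartialDerivsAt (X4' α β) _ x₁ x₂ x₃ x₄ := (e 3).fH1 (e 0) (e 2) h₁
  rw [sub_sq_comm x₁] at g₄
  have g₁ : HasPartialDerivsAt (X1' α β) _ x₁ x₂ x₃ x₄ := (e 0).fH1 g₂ g₄ h₂
  have g₃ : HasPartialDerivsAt (X3' α β) _ x₁ x₂ x₃ x₄ := (e 2).fH1 g₄ g₂ h₂.symm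
  rw [sub_sq_comm (X4' α β x₁ x₂ x₃ x₄)] at g₃
  rw [g₁.pb_eq g₂, g₃.pb_eq g₄, g₁.pb_eq g₃, g₁.pb_eq g₄, g₂.pb_eq g₃, g₂.pb_eq g₄]
  exact (isDarbouxFrame_single.shear_momenta canonicalSymplecticForm_isAlt _).shear_positions
    canonicalSymplecticForm_isAlt _
end

section
/- The map R^ε_{α,β}(x₁,x₂,y₁,y₂) = (u₁,u₂,v₁,v₂) with u₁ = (α₂/β₂)y₁ − ε²(α₁β₂ − α₂β₁)x₁ / [β₂(α₂β₂ + ε²x₁y₂)], u₂ = y₂, v₁ = x₁, v₂ = (β₂/α₂)x₂ + ε²(α₁β₂ − α₂β₁)y₂ / [α₂(α₂β₂ + ε²x₁y₂)], with vector parameters α = (α₁,α₂), β = (β₁,β₂), admits as strong Lax matrix the 2×2 matrix L(x₁,x₂;α) with entries L₁₁ = (ε/α₂)(α₁ + x₁x₂) − εζ, L₁₂ = x₁, L₂₁ = x₂, L₂₂ = α₂/ε; that is, L(u₁,u₂;α)L(v₁,v₂;β) = L(y₁,y₂;β)L(x₁,x₂;α) holds identically in ζ. -/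
/-!
Put `κ = ε²(α₁β₂ − α₂β₁) / (α₂β₂ + ε²x₁y₂)`; the map then reads `β₂u₁ = α₂y₁ − κx₁`,
`α₂v₂ = β₂x₂ + κy₂`. In the Lax equation the ζ-dependence cancels entrywise, and every
remaining entry is a polynomial multiple of the single relation
`κ(α₂β₂ + ε²x₁y₂) = ε²(α₁β₂ − α₂β₁)`.
-/

open Matrix

/-- Lax matrix of the multiparametric NLS (generalized Adler–Yamilov) map. -/
noncomputable def LNLS (ε x₁ x₂ γ₁ γ₂ ζ : ℂ) : Matrix (Fin 2) (Fin 2) ℂ :=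
  !![(ε / γ₂) * (γ₁ + x₁ * x₂) - ε * ζ, x₁; x₂, γ₂ / ε]

theorem LNLS_mul_LNLS_eq_of_coupling {ε α₁ α₂ β₁ β₂ x₁ x₂ y₁ y₂ u₁ v₂ κ : ℂ}
    (hε : ε ≠ 0) (hα₂ : α₂ ≠ 0) (hβ₂ : β₂ ≠ 0)
    (hκ : κ * (α₂ * β₂ + ε ^ 2 * x₁ * y₂) = ε ^ 2 * (α₁ * β₂ - α₂ * β₁))
    (hu₁ : u₁ = (α₂ * y₁ - κ * x₁) / β₂) (hv₂ : v₂ = (β₂ * x₂ + κ * y₂) / α₂) (ζ : ℂ) :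
    LNLS ε u₁ y₂ α₁ α₂ ζ * LNLS ε x₁ v₂ β₁ β₂ ζ
      = LNLS ε y₁ y₂ β₁ β₂ ζ * LNLS ε x₁ x₂ α₁ α₂ ζ := by
  subst hu₁ hv₂
  simp only [LNLS, mul_fin_two]
  congr 1
  refine vec2_eq (vec2_eq ?_ ?_) (vec2_eq ?_ ?_)
  · field_simp
    linear_combination (α₂ * y₁ * y₂ - β₂ * x₁ * x₂ - κ * x₁ * y₂) * hκ
  · field_simp
    linear_combination -x₁ * hκ
  · field_simp
    linear_combination y₂ * hκ
  · ring

/-- The generalized Adler–Yamilov map `R^ε_{α,β}` admits `LNLS` as Lax matrix: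
`L(u₁,u₂;α)·L(v₁,v₂;β) = L(y₁,y₂;β)·L(x₁,x₂;α)` identically in ζ. -/
theorem NLS_lift_Lax (ε α₁ α₂ β₁ β₂ x₁ x₂ y₁ y₂ u₁ u₂ v₁ v₂ : ℂ)
    (hε : ε ≠ 0) (hα₂ : α₂ ≠ 0) (hβ₂ : β₂ ≠ 0)
    (hD : α₂ * β₂ + ε ^ 2 * x₁ * y₂ ≠ 0)
    (hu₁ : u₁ = (α₂ / β₂) * y₁ -
      ε ^ 2 * (α₁ * β₂ - α₂ * β₁) * x₁ / (β₂ * (α₂ * β₂ + ε ^ 2 * x₁ * y₂)))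
    (hu₂ : u₂ = y₂) (hv₁ : v₁ = x₁)
    (hv₂ : v₂ = (β₂ / α₂) * x₂ +
      ε ^ 2 * (α₁ * β₂ - α₂ * β₁) * y₂ / (α₂ * (α₂ * β₂ + ε ^ 2 * x₁ * y₂))) :
    ∀ ζ : ℂ, LNLS ε u₁ u₂ α₁ α₂ ζ * LNLS ε v₁ v₂ β₁ β₂ ζ
           = LNLS ε y₁ y₂ β₁ β₂ ζ * LNLS ε x₁ x₂ α₁ α₂ ζ := by
  subst u₁ u₂ v₁ v₂
  refine LNLS_mul_LNLS_eq_of_coupling hε hα₂ hβ₂ (div_mul_cancel₀ _ hD) ?_ ?_ <;>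
    generalize α₂ * β₂ + ε ^ 2 * x₁ * y₂ = D <;> ring
end

section
/- (Proposition 5.1(α), specialized.) If (t₂, w₂) satisfy the multiparametric lattice NLS system α₂²β₂t₁ − β₂²α₂t₂ − ε²t((β₂w₁ − α₂w₂)t + α₁β₂ − α₂β₁) = 0 and β₂²α₂w₁ − α₂²β₂w₂ + ε²w₁₂((β₂w₁ − α₂w₂)t + α₁β₂ − α₂β₁) = 0, then the Lax equation L(t₂,w₁₂;α)L(t,w₂;β) = L(t₁,w₁₂;β)L(t,w₁;α) holds identically in the spectral parameter ζ, where L(x₁,x₂;γ) is the matrix with entries L₁₁ = (ε/γ₂)(γ₁ + x₁x₂) − εζ, L₁₂ = x₁, L₂₁ = x₂, L₂₂ = γ₂/ε, γ = (γ₁,γ₂). -/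
/-!
Write `L(ζ) = L(0) - ζ • E` with `E = single 0 0 ε`. In any algebra,
`(A - ζE)(B - ζE) = AB - ζ(EB + AE) + ζ²E²`, so the Lax equation holds for all `ζ` once it holds
at `ζ = 0` and the coefficients of `ζ` agree. The latter is a single scalar identity,
`t (β₂w₁ - α₂w₂) = w₁₂ (β₂t₂ - α₂t₁)`, obtained by eliminating the common factor
`(β₂w₁ - α₂w₂)t + α₁β₂ - α₂β₁` between the two equations of the system.
-/

open Matrix

theorem mul_eq_mul_of_sub_smul {R A : Type*} [CommRing R] [Ring A] [Algebra R A] {a b c d e : A}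
    (h₀ : a * b = c * d) (h₁ : e * b + a * e = e * d + c * e) (z : R) :
    (a - z • e) * (b - z • e) = (c - z • e) * (d - z • e) := by
  have expand : ∀ x y : A,
      (x - z • e) * (y - z • e) = x * y - z • (e * y + x * e) + (z * z) • (e * e) := by
    intro x y
    simp only [sub_mul, mul_sub, smul_mul_assoc, mul_smul_comm, smul_add, mul_smul, smul_sub]
    abel
  rw [expand, expand, h₀, h₁]

theorem LNLS_eq_sub_smul (ε x₁ x₂ γ₁ γ₂ ζ : ℂ) :
    LNLS ε x₁ x₂ γ₁ γ₂ ζ = LNLS ε x₁ x₂ γ₁ γ₂ 0 - ζ • single 0 0 ε := by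
  ext i j
  fin_cases i <;> fin_cases j <;> simp [LNLS]
  ring

theorem NLS_system_balance {ε α₁ α₂ β₁ β₂ t t₁ t₂ w₁ w₂ w₁₂ : ℂ} (hα₂ : α₂ ≠ 0) (hβ₂ : β₂ ≠ 0)
    (h1 : α₂ ^ 2 * β₂ * t₁ - β₂ ^ 2 * α₂ * t₂
        - ε ^ 2 * t * ((β₂ * w₁ - α₂ * w₂) * t + α₁ * β₂ - α₂ * β₁) = 0)
    (h2 : β₂ ^ 2 * α₂ * w₁ - α₂ ^ 2 * β₂ * w₂
        + ε ^ 2 * w₁₂ * ((β₂ * w₁ - α₂ * w₂) * t + α₁ * β₂ - α₂ * β₁) = 0) :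
    t * (β₂ * w₁ - α₂ * w₂) = w₁₂ * (β₂ * t₂ - α₂ * t₁) := by
  apply mul_left_cancel₀ (mul_ne_zero hα₂ hβ₂)
  linear_combination w₁₂ * h1 + t * h2

theorem single_mul_LNLS_add_LNLS_mul_single {ε α₁ α₂ β₁ β₂ t t₁ t₂ w₁ w₂ w₁₂ : ℂ}
    (hα₂ : α₂ ≠ 0) (hβ₂ : β₂ ≠ 0)
    (hbal : t * (β₂ * w₁ - α₂ * w₂) = w₁₂ * (β₂ * t₂ - α₂ * t₁)) :
    single 0 0 ε * LNLS ε t w₂ β₁ β₂ 0 + LNLS ε t₂ w₁₂ α₁ α₂ 0 * single 0 0 ε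
      = single 0 0 ε * LNLS ε t w₁ α₁ α₂ 0 + LNLS ε t₁ w₁₂ β₁ β₂ 0 * single 0 0 ε := by
  ext i j
  fin_cases i <;> fin_cases j <;> simp [LNLS, mul_apply, single_apply, -cons_mul]
  field_simp
  linear_combination -ε ^ 2 * hbal

theorem LNLS_mul_LNLS_eq_at_zero {ε α₁ α₂ β₁ β₂ t t₁ t₂ w₁ w₂ w₁₂ : ℂ}
    (hε : ε ≠ 0) (hα₂ : α₂ ≠ 0) (hβ₂ : β₂ ≠ 0)
    (h1 : α₂ ^ 2 * β₂ * t₁ - β₂ ^ 2 * α₂ * t₂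
        - ε ^ 2 * t * ((β₂ * w₁ - α₂ * w₂) * t + α₁ * β₂ - α₂ * β₁) = 0)
    (h2 : β₂ ^ 2 * α₂ * w₁ - α₂ ^ 2 * β₂ * w₂
        + ε ^ 2 * w₁₂ * ((β₂ * w₁ - α₂ * w₂) * t + α₁ * β₂ - α₂ * β₁) = 0) :
    LNLS ε t₂ w₁₂ α₁ α₂ 0 * LNLS ε t w₂ β₁ β₂ 0 = LNLS ε t₁ w₁₂ β₁ β₂ 0 * LNLS ε t w₁ α₁ α₂ 0 := by
  have hbal := NLS_system_balance hα₂ hβ₂ h1 h2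
  ext i j
  fin_cases i <;> fin_cases j <;> simp [LNLS, mul_apply, Fin.sum_univ_two] <;> field_simp
  · apply mul_left_cancel₀ (mul_ne_zero hα₂ (pow_ne_zero 2 hβ₂))
    linear_combination
      (-ε ^ 2 * β₁ * w₁₂ - (ε ^ 2 * t * w₁₂ + α₂ * β₂) * w₂) * h1
        + (-(ε ^ 2 * t * w₁₂ + α₂ * β₂) * t₁ - ε ^ 2 * t * (β₁ + t * w₂ - t₁ * w₁₂)) * h2
  · linear_combination -h1 - ε ^ 2 * t * hbal
  · linear_combination -h2

/-- If `(t₂, w₂)` satisfy the multiparametric lattice NLS system, then the Lax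
equation `L(t₂,w₁₂;α)L(t,w₂;β) = L(t₁,w₁₂;β)L(t,w₁;α)` holds for all ζ. -/
theorem NLS_system_Lax (ε α₁ α₂ β₁ β₂ t t₁ t₂ w₁ w₂ w₁₂ : ℂ)
    (hε : ε ≠ 0) (hα₂ : α₂ ≠ 0) (hβ₂ : β₂ ≠ 0)
    (h1 : α₂ ^ 2 * β₂ * t₁ - β₂ ^ 2 * α₂ * t₂
        - ε ^ 2 * t * ((β₂ * w₁ - α₂ * w₂) * t + α₁ * β₂ - α₂ * β₁) = 0)
    (h2 : β₂ ^ 2 * α₂ * w₁ - α₂ ^ 2 * β₂ * w₂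
        + ε ^ 2 * w₁₂ * ((β₂ * w₁ - α₂ * w₂) * t + α₁ * β₂ - α₂ * β₁) = 0) :
    ∀ ζ : ℂ, LNLS ε t₂ w₁₂ α₁ α₂ ζ * LNLS ε t w₂ β₁ β₂ ζ
           = LNLS ε t₁ w₁₂ β₁ β₂ ζ * LNLS ε t w₁ α₁ α₂ ζ := by
  intro ζ
  simpa only [← LNLS_eq_sub_smul] using
    mul_eq_mul_of_sub_smul (LNLS_mul_LNLS_eq_at_zero hε hα₂ hβ₂ h1 h2)
      (single_mul_LNLS_add_LNLS_mul_single hα₂ hβ₂ (NLS_system_balance hα₂ hβ₂ h1 h2)) ζ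
end

section
/- The sum I = x₁ + x₂ + x₃ + x₄ is invariant under the (2,2) periodic reduction of the H₁ equation: with F(x,x₁,x₂,α,β) = x + (α−β)/(x₁−x₂) and S_{α,β}(x₁,x₂,x₃,x₄) = (x₁',x₂',x₃',x₄') defined by x₂' = F(x₂,x₃,x₁,α,β), x₄' = F(x₄,x₁,x₃,α,β), x₃' = F(x₃,x₄',x₂',α,β), x₁' = F(x₁,x₂',x₄',α,β), one has x₁' + x₂' + x₃' + x₄' = x₁ + x₂ + x₃ + x₄. -/
theorem FH1_add_FH1_swap (α β x y a b : ℂ) :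
    FH1 α β x a b + FH1 α β y b a = x + y := by
  rw [FH1, FH1, ← neg_sub a b, div_neg]
  ring

theorem H1_reduction_sum_invariant_general (α β x₁ x₂ x₃ x₄ x₁' x₂' x₃' x₄' : ℂ)
    (hx₂' : x₂' = FH1 α β x₂ x₃ x₁)
    (hx₄' : x₄' = FH1 α β x₄ x₁ x₃)
    (hx₃' : x₃' = FH1 α β x₃ x₄' x₂')
    (hx₁' : x₁' = FH1 α β x₁ x₂' x₄') :
    x₁' + x₂' + x₃' + x₄' = x₁ + x₂ + x₃ + x₄ := by
  have even_sum : x₂' + x₄' = x₂ + x₄ := by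
    rw [hx₂', hx₄', FH1_add_FH1_swap]
  have odd_sum : x₁' + x₃' = x₁ + x₃ := by
    rw [hx₁', hx₃', FH1_add_FH1_swap]
  linear_combination even_sum + odd_sum

/-- `I = x₁+x₂+x₃+x₄` is an invariant of the (2,2) periodic reduction of H₁. -/
theorem H1_reduction_sum_invariant (α β x₁ x₂ x₃ x₄ x₁' x₂' x₃' x₄' : ℂ)
    (h₁ : x₁ ≠ x₃)
    (hx₂' : x₂' = FH1 α β x₂ x₃ x₁)
    (hx₄' : x₄' = FH1 α β x₄ x₁ x₃)
    (h₂ : x₂' ≠ x₄')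
    (hx₃' : x₃' = FH1 α β x₃ x₄' x₂')
    (hx₁' : x₁' = FH1 α β x₁ x₂' x₄') :
    x₁' + x₂' + x₃' + x₄' = x₁ + x₂ + x₃ + x₄ :=
  H1_reduction_sum_invariant_general α β x₁ x₂ x₃ x₄ x₁' x₂' x₃' x₄' hx₂' hx₄' hx₃' hx₁'
end

section
/- The cross-ratio I = (x₁−x₂)(x₃−x₄)/[(x₂−x₃)(x₁−x₄)] is invariant under the (2,2) periodic reduction of the cross-ratio equation Q₁^{δ=0}: with F(x,x₁,x₂,α,β) = [αx₁(x−x₂) + βx₂(x₁−x)]/[α(x−x₂) + β(x₁−x)] and S_{α,β}(x₁,x₂,x₃,x₄) = (x₁',x₂',x₃',x₄') defined by x₂' = F(x₂,x₃,x₁,α,β), x₄' = F(x₄,x₁,x₃,α,β), x₃' = F(x₃,x₄',x₂',α,β), x₁' = F(x₁,x₂',x₄',α,β), one has (x₁'−x₂')(x₃'−x₄')/[(x₂'−x₃')(x₁'−x₄')] = (x₁−x₂)(x₃−x₄)/[(x₂−x₃)(x₁−x₄)]. -/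
/-!
With `D = α (x - b) + β (a - x)` one has `FQ1 α β x a b - a = β (a - x) (b - a) / D` and
`FQ1 α β x a b - b = α (x - b) (a - b) / D`. Hence updating two opposite vertices `x, z` of a
quadrilateral `x, a, z, b` by `FQ1`, each with the other two vertices as its neighbours, multiplies a
suitable cross-ratio by `(β / α) ^ 2`. The (2,2) map does this twice, the second time for the
reciprocal ordering of the cross-ratio, so the two factors cancel.
-/

/-- F from the cross-ratio (Q₁^{δ=0}) equation. -/
noncomputable def FQ1 (α β x x₁ x₂ : ℂ) : ℂ :=
  (α * x₁ * (x - x₂) + β * x₂ * (x₁ - x)) / (α * (x - x₂) + β * (x₁ - x))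

def crossRatio {K : Type*} [Field K] (p q r s : K) : K :=
  (p - q) * (r - s) / ((q - r) * (p - s))

section
variable {K : Type*} [Field K] (p q r s : K)

theorem crossRatio_swap_two_four : crossRatio p s r q = (crossRatio p q r s)⁻¹ := by
  rw [crossRatio, crossRatio, inv_div, ← neg_div_neg_eq]
  congr 1 <;> ring

theorem crossRatio_swap_one_three : crossRatio r q p s = (crossRatio p q r s)⁻¹ := by
  rw [crossRatio, crossRatio, inv_div, ← neg_div_neg_eq]
  congr 1 <;> ring
end

section
variable {α β x a b : ℂ}

theorem FQ1_sub_left (hD : α * (x - b) + β * (a - x) ≠ 0) :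
    FQ1 α β x a b - a = β * (a - x) * (b - a) / (α * (x - b) + β * (a - x)) := by
  rw [FQ1, div_sub' hD]; ring_nf

theorem FQ1_sub_right (hD : α * (x - b) + β * (a - x) ≠ 0) :
    FQ1 α β x a b - b = α * (x - b) * (a - b) / (α * (x - b) + β * (a - x)) := by
  rw [FQ1, div_sub' hD]; ring_nf

theorem FQ1_ne_left_iff (hD : α * (x - b) + β * (a - x) ≠ 0) :
    FQ1 α β x a b ≠ a ↔ β ≠ 0 ∧ a ≠ x ∧ b ≠ a := by
  rw [ne_eq, ← sub_eq_zero, FQ1_sub_left hD]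
  simp [hD, sub_eq_zero, and_assoc]

theorem FQ1_ne_right_iff (hD : α * (x - b) + β * (a - x) ≠ 0) :
    FQ1 α β x a b ≠ b ↔ α ≠ 0 ∧ x ≠ b ∧ a ≠ b := by
  rw [ne_eq, ← sub_eq_zero, FQ1_sub_right hD]
  simp [hD, sub_eq_zero, and_assoc]

theorem crossRatio_FQ1 {z : ℂ} (hab : a ≠ b) (hx : α * (x - b) + β * (a - x) ≠ 0)
    (hz : α * (z - a) + β * (b - z) ≠ 0) :
    crossRatio (FQ1 α β x a b) a (FQ1 α β z b a) b = (β / α) ^ 2 * crossRatio a x b z := by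
  rw [crossRatio, ← neg_sub (FQ1 α β z b a) a, FQ1_sub_left hx, FQ1_sub_right hx,
    FQ1_sub_left hz, FQ1_sub_right hz]
  field_simp
  rw [← div_neg, crossRatio, mul_div_assoc', div_div]
  congr 1 <;> ring
end

theorem Q1_reduction_crossratio_invariant_general (α β x₁ x₂ x₃ x₄ x₁' x₂' x₃' x₄' : ℂ)
    (hd₂ : α * (x₂ - x₁) + β * (x₃ - x₂) ≠ 0)
    (hd₄ : α * (x₄ - x₃) + β * (x₁ - x₄) ≠ 0)
    (hx₂' : x₂' = FQ1 α β x₂ x₃ x₁)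
    (hx₄' : x₄' = FQ1 α β x₄ x₁ x₃)
    (hd₃ : α * (x₃ - x₂') + β * (x₄' - x₃) ≠ 0)
    (hd₁ : α * (x₁ - x₄') + β * (x₂' - x₁) ≠ 0)
    (hx₃' : x₃' = FQ1 α β x₃ x₄' x₂')
    (hx₁' : x₁' = FQ1 α β x₁ x₂' x₄')
    (hcr' : (x₂' - x₃') * (x₁' - x₄') ≠ 0) :
    (x₁' - x₂') * (x₃' - x₄') / ((x₂' - x₃') * (x₁' - x₄'))
      = (x₁ - x₂) * (x₃ - x₄) / ((x₂ - x₃) * (x₁ - x₄)) := by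
  have hx₃'x₂' : x₃' ≠ x₂' := (sub_ne_zero.1 (left_ne_zero_of_mul hcr')).symm
  obtain ⟨hα, hx₃x₂', hx₄'x₂'⟩ := (FQ1_ne_right_iff hd₃).1 (hx₃' ▸ hx₃'x₂')
  obtain ⟨hβ, -, hx₁x₃⟩ := (FQ1_ne_left_iff hd₂).1 (hx₂' ▸ hx₃x₂'.symm)
  have first_half : crossRatio x₂' x₃ x₄' x₁ = (β / α) ^ 2 * crossRatio x₃ x₂ x₁ x₄ := by
    rw [hx₂', hx₄']; exact crossRatio_FQ1 hx₁x₃.symm hd₂ hd₄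
  have second_half : crossRatio x₁' x₂' x₃' x₄' = (β / α) ^ 2 * crossRatio x₂' x₁ x₄' x₃ := by
    rw [hx₁', hx₃']; exact crossRatio_FQ1 hx₄'x₂'.symm hd₁ hd₃
  change crossRatio x₁' x₂' x₃' x₄' = crossRatio x₁ x₂ x₃ x₄
  rw [second_half, crossRatio_swap_two_four, first_half, crossRatio_swap_one_three]
  field_simp

/-- The cross-ratio `(x₁−x₂)(x₃−x₄)/[(x₂−x₃)(x₁−x₄)]` is an invariant of the
(2,2) periodic reduction of the cross-ratio equation. -/
theorem Q1_reduction_crossratio_invariant (α β x₁ x₂ x₃ x₄ x₁' x₂' x₃' x₄' : ℂ)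
    (hd₂ : α * (x₂ - x₁) + β * (x₃ - x₂) ≠ 0)
    (hd₄ : α * (x₄ - x₃) + β * (x₁ - x₄) ≠ 0)
    (hx₂' : x₂' = FQ1 α β x₂ x₃ x₁)
    (hx₄' : x₄' = FQ1 α β x₄ x₁ x₃)
    (hd₃ : α * (x₃ - x₂') + β * (x₄' - x₃) ≠ 0)
    (hd₁ : α * (x₁ - x₄') + β * (x₂' - x₁) ≠ 0)
    (hx₃' : x₃' = FQ1 α β x₃ x₄' x₂')
    (hx₁' : x₁' = FQ1 α β x₁ x₂' x₄')
    (hcr : (x₂ - x₃) * (x₁ - x₄) ≠ 0)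
    (hcr' : (x₂' - x₃') * (x₁' - x₄') ≠ 0) :
    (x₁' - x₂') * (x₃' - x₄') / ((x₂' - x₃') * (x₁' - x₄'))
      = (x₁ - x₂) * (x₃ - x₄) / ((x₂ - x₃) * (x₁ - x₄)) :=
  Q1_reduction_crossratio_invariant_general α β x₁ x₂ x₃ x₄ x₁' x₂' x₃' x₄' hd₂ hd₄ hx₂' hx₄' hd₃
    hd₁ hx₃' hx₁' hcr'
end
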